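/- arXiv:2402.10457 — 2 statements merged into one kernel-verified Lean document; each statement's English description precedes it below -/
import Mathlib

section
/- Let (Ω, μ) be a probability space, let n ≥ 1 be an integer, let X_1, …, X_n : Ω → ℕ be random variables, and let d_1, …, d_n be natural numbers such that Σ_{i=1}^n 2^{d_i} ≤ 2n and such that for every i and every natural number k, μ({ω : X_i(ω) ≥ d_i + k}) ≤ (1/2)^k. Then μ({ω : ∃ i, X_i(ω) ≥ log₂(n) + 10}) ≤ 1/100. -/
/-! Union bound at the integer level `M = ⌊log₂ n⌋ + 10`: item `i` reaches `M` with probability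
at most `2^(d i) / 2^M`, so the total is at most `2n / 2^M < 1/256`. -/

open MeasureTheory

lemma ENNReal.half_pow_tsub_le_two_pow_div (d M : ℕ) :
    (1 / 2 : ENNReal) ^ (M - d) ≤ 2 ^ d / 2 ^ M := by
  rw [ENNReal.le_div_iff_mul_le (by simp) (by simp), one_div, ← ENNReal.inv_pow]
  calc (2 ^ (M - d))⁻¹ * (2 : ENNReal) ^ M ≤ (2 ^ (M - d))⁻¹ * 2 ^ (M - d + d) := by
        gcongr
        · norm_num
        · omega
    _ = 2 ^ d := by
        rw [pow_add, ← mul_assoc, ENNReal.inv_mul_cancel (by simp) (by simp), one_mul]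

section GeometricTail

variable {Ω : Type*} [MeasurableSpace Ω] (μ : Measure Ω) [IsProbabilityMeasure μ]

lemma measure_le_two_pow_div_of_geometric_tail {X : Ω → ℕ} {d : ℕ}
    (htail : ∀ k : ℕ, μ {ω | d + k ≤ X ω} ≤ (1 / 2 : ENNReal) ^ k) (M : ℕ) :
    μ {ω | M ≤ X ω} ≤ 2 ^ d / 2 ^ M := by
  rcases le_or_gt d M with hdM | hMd
  · calc μ {ω | M ≤ X ω} = μ {ω | d + (M - d) ≤ X ω} := by rw [Nat.add_sub_cancel' hdM]
      _ ≤ (1 / 2) ^ (M - d) := htail (M - d)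
      _ ≤ 2 ^ d / 2 ^ M := ENNReal.half_pow_tsub_le_two_pow_div d M
  · refine prob_le_one.trans ?_
    rw [ENNReal.le_div_iff_mul_le (by simp) (by simp), one_mul]
    exact pow_le_pow_right₀ (by norm_num) hMd.le

lemma measure_exists_le_le_sum_two_pow_div_of_geometric_tail {ι : Type*} [Fintype ι]
    {X : ι → Ω → ℕ} {d : ι → ℕ}
    (htail : ∀ i, ∀ k : ℕ, μ {ω | d i + k ≤ X i ω} ≤ (1 / 2 : ENNReal) ^ k) (M : ℕ) :
    μ {ω | ∃ i, M ≤ X i ω} ≤ (∑ i, 2 ^ d i) / 2 ^ M := by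
  rw [Set.ofPred_exists, div_eq_mul_inv, Finset.sum_mul]
  exact (measure_iUnion_fintype_le μ _).trans <| Finset.sum_le_sum fun i _ =>
    (measure_le_two_pow_div_of_geometric_tail μ (htail i) M).trans_eq (div_eq_mul_inv _ _)

end GeometricTail

lemma two_mul_div_two_pow_log_add_ten_le (n : ℕ) :
    (2 * n : ENNReal) / 2 ^ (Nat.log 2 n + 10) ≤ 1 / 100 := by
  have h200 : 200 * n ≤ 2 ^ (Nat.log 2 n + 10) := by
    have := Nat.lt_pow_succ_log_self (by norm_num : 1 < 2) n
    rw [pow_succ] at this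
    rw [pow_add]
    omega
  rw [ENNReal.div_le_iff (by simp) (by simp), one_div, ← ENNReal.div_eq_inv_mul,
    ENNReal.le_div_iff_mul_le (by simp) (by simp)]
  exact_mod_cast (by omega : 2 * n * 100 ≤ 2 ^ (Nat.log 2 n + 10))

theorem stmt_1_general {Ω : Type*} [MeasurableSpace Ω] (μ : Measure Ω) [IsProbabilityMeasure μ]
    (n : ℕ) (X : Fin n → Ω → ℕ) (d : Fin n → ℕ)
    (hd : ∑ i, (2 : ℝ) ^ (d i) ≤ 2 * n)
    (htail : ∀ i, ∀ k : ℕ, μ {ω | d i + k ≤ X i ω} ≤ (1 / 2 : ENNReal) ^ k) :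
    μ {ω | ∃ i, Real.logb 2 n + 10 ≤ (X i ω : ℝ)} ≤ 1 / 100 := by
  have hlog : (Nat.log 2 n : ℝ) ≤ Real.logb 2 n := by exact_mod_cast Real.natLog_le_logb n 2
  have hsum : ∑ i, (2 : ENNReal) ^ d i ≤ 2 * n := by
    have : ∑ i, 2 ^ d i ≤ 2 * n := by exact_mod_cast hd
    exact_mod_cast this
  calc μ {ω | ∃ i, Real.logb 2 n + 10 ≤ (X i ω : ℝ)}
      ≤ μ {ω | ∃ i, Nat.log 2 n + 10 ≤ X i ω} := measure_mono fun ω ⟨i, hi⟩ =>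
        ⟨i, by exact_mod_cast (by push_cast; linarith : ((Nat.log 2 n + 10 : ℕ) : ℝ) ≤ X i ω)⟩
    _ ≤ (∑ i, 2 ^ d i) / 2 ^ (Nat.log 2 n + 10) :=
        measure_exists_le_le_sum_two_pow_div_of_geometric_tail μ htail _
    _ ≤ 2 * n / 2 ^ (Nat.log 2 n + 10) := by gcongr
    _ ≤ 1 / 100 := two_mul_div_two_pow_log_add_ten_le n

/-- Union-bound lemma: if each `X i` exceeds its deterministic level `d i` by `k` with
probability at most `2^{-k}` and `∑ 2^{d i} ≤ 2n`, then with probability at least `0.99`,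
no `X i` reaches level `log₂ n + 10`. -/
theorem stmt_1 {Ω : Type*} [MeasurableSpace Ω] (μ : Measure Ω) [IsProbabilityMeasure μ]
    (n : ℕ) (hn : 1 ≤ n) (X : Fin n → Ω → ℕ) (d : Fin n → ℕ)
    (hd : ∑ i, (2 : ℝ) ^ (d i) ≤ 2 * n)
    (htail : ∀ i, ∀ k : ℕ, μ {ω | d i + k ≤ X i ω} ≤ (1 / 2 : ENNReal) ^ k) :
    μ {ω | ∃ i, Real.logb 2 n + 10 ≤ (X i ω : ℝ)} ≤ 1 / 100 :=
  stmt_1_general μ n X d hd htail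
end

section
/- Let n ≥ 1 be an integer, let α ∈ (0,1) and let β be a real number with 0 ≤ β < α/(4n). Let f : {1,…,n} → ℝ be a probability vector (f_i ≥ 0, Σ f_i = 1) and let p : {1,…,n} → ℝ satisfy 0 < p_i ≤ 1 and p_i ≥ α·f_i − β for all i. Then Σ_{i=1}^n f_i · min(log₂(1/p_i), log₂ n) ≤ log₂(2/α) + Σ_{i=1}^n f_i · min(log₂(1/f_i), log₂ n). -/
/-- Robustness of the learning-augmented skip list to `(α, β)`-noisy oracles. -/
theorem stmt_11 (n : ℕ) (hn : 1 ≤ n) (α β : ℝ) (hα0 : 0 < α) (hα1 : α < 1)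
    (hβ0 : 0 ≤ β) (hβ : β < α / (4 * n)) (f : Fin n → ℝ) (hf0 : ∀ i, 0 ≤ f i)
    (hfsum : ∑ i, f i = 1) (p : Fin n → ℝ) (hp0 : ∀ i, 0 < p i) (hp1 : ∀ i, p i ≤ 1)
    (hnoisy : ∀ i, α * f i - β ≤ p i) :
    ∑ i, f i * min (Real.logb 2 (1 / p i)) (Real.logb 2 n) ≤
      Real.logb 2 (2 / α) + ∑ i, f i * min (Real.logb 2 (1 / f i)) (Real.logb 2 n) := by
  have h2 : (1:ℝ) < 2 := one_lt_two
  set K := Real.logb 2 (2 / α) with hKdef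
  have hK0 : 0 ≤ K := Real.logb_nonneg h2 (by rw [le_div_iff₀ hα0]; linarith)
  have hn' : (1:ℝ) ≤ n := by exact_mod_cast hn
  have hnpos : (0:ℝ) < n := lt_of_lt_of_le zero_lt_one hn'
  have key : ∀ i, f i * min (Real.logb 2 (1 / p i)) (Real.logb 2 n) ≤
      f i * (K + min (Real.logb 2 (1 / f i)) (Real.logb 2 n)) := by
    intro i
    rcases eq_or_lt_of_le (hf0 i) with h0 | h0
    · simp [← h0]
    refine mul_le_mul_of_nonneg_left ?_ (hf0 i)
    by_cases hcase : 2 * β / α ≤ f i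
    · have hpge : α * f i / 2 ≤ p i := by
        have hb2 : β ≤ α * f i / 2 := by
          rw [div_le_iff₀ hα0] at hcase
          nlinarith
        linarith [hnoisy i]
      have hlog : Real.logb 2 (1 / p i) ≤ K + Real.logb 2 (1 / f i) := by
        have h1 : (1:ℝ) / p i ≤ (2 / α) * (1 / f i) := by
          have h2' := one_div_le_one_div_of_le (by positivity : (0:ℝ) < α * f i / 2) hpge
          calc (1:ℝ) / p i ≤ 1 / (α * f i / 2) := h2'
            _ = (2 / α) * (1 / f i) := by
                field_simp
        calc Real.logb 2 (1 / p i) ≤ Real.logb 2 ((2 / α) * (1 / f i)) :=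
              Real.logb_le_logb_of_le h2 (one_div_pos.mpr (hp0 i)) h1
          _ = K + Real.logb 2 (1 / f i) := Real.logb_mul (by positivity) (by positivity)
      rcases le_total (Real.logb 2 (1 / f i)) (Real.logb 2 n) with h | h
      · rw [min_eq_left h]
        exact le_trans (min_le_left _ _) (by linarith)
      · rw [min_eq_right h]
        exact le_trans (min_le_right _ _) (by linarith)
    · push_neg at hcase
      have hfsmall : f i < 1 / n := by
        have hb' : β < α / (4 * n) := hβ
        rw [lt_div_iff₀ (by positivity : (0:ℝ) < 4 * n)] at hb'
        rw [lt_div_iff₀ hα0] at hcase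
        rw [lt_div_iff₀ hnpos]
        nlinarith
      have hlogf : Real.logb 2 (n : ℝ) ≤ Real.logb 2 (1 / f i) := by
        apply Real.logb_le_logb_of_le h2 hnpos
        rw [le_div_iff₀ h0]
        nlinarith [hfsmall, hnpos, (lt_div_iff₀ hnpos).mp hfsmall]
      rw [min_eq_right hlogf]
      exact le_trans (min_le_right _ _) (by linarith)
  calc ∑ i, f i * min (Real.logb 2 (1 / p i)) (Real.logb 2 n)
      ≤ ∑ i, f i * (K + min (Real.logb 2 (1 / f i)) (Real.logb 2 n)) :=
        Finset.sum_le_sum fun i _ => key i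
    _ = K + ∑ i, f i * min (Real.logb 2 (1 / f i)) (Real.logb 2 n) := by
        simp only [mul_add, Finset.sum_add_distrib, ← Finset.sum_mul, hfsum, one_mul]
end
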